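/- Let n ≥ 3 and let (X, w) be a fully symmetric finite weighted set in ℝ^n \ {0} whose weight function is a constant w_r > 0 on each layer X_r. Then (X, w) is a Euclidean 5-design if and only if Σ_{r ∈ R} Σ_{x ∈ X_r} w_r · f_{4,2}(x) = 0. -/

import Mathlib

open MeasureTheory Metric
open scoped Classical

noncomputable section

/-- The average of `f` over the sphere of radius `r` centered at the origin in `ℝⁿ`,
with respect to the `(n-1)`-dimensional surface (Hausdorff) measure. -/
def sphereAvg (n : ℕ) (r : ℝ) (f : EuclideanSpace ℝ (Fin n) → ℝ) : ℝ :=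
  ⨍ x in sphere (0 : EuclideanSpace ℝ (Fin n)) r, f x ∂(μH[(n : ℝ) - 1])

/-- `(X, w)` is a Euclidean `t`-design in `ℝⁿ`: for every polynomial `f` of total degree
at most `t`, the weighted sum of the spherical averages of `f` over the spheres through the
layers of `X` equals the weighted sum of the values of `f` on `X`. -/
def IsEuclideanDesign (n : ℕ) (X : Finset (EuclideanSpace ℝ (Fin n)))
    (w : EuclideanSpace ℝ (Fin n) → ℝ) (t : ℕ) : Prop :=
  ∀ f : MvPolynomial (Fin n) ℝ, f.totalDegree ≤ t →
    ∑ r ∈ X.image (fun x => ‖x‖),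
      (∑ x ∈ X.filter (fun x => ‖x‖ = r), w x) *
        sphereAvg n r (fun x => MvPolynomial.eval (fun i => x i) f)
    = ∑ x ∈ X, w x * MvPolynomial.eval (fun i => x i) f

/-- The signed permutation of coordinates determined by `g` and signs `ε`. -/
def signedPerm (n : ℕ) (g : Equiv.Perm (Fin n)) (ε : Fin n → Bool)
    (x : EuclideanSpace ℝ (Fin n)) : EuclideanSpace ℝ (Fin n) :=
  WithLp.toLp 2 (fun i => (if ε i then -1 else 1) * x (g i))

/-- `(X, w)` is fully symmetric: `X` is invariant under all coordinate permutations and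
sign changes, and `w` is invariant as well. -/
def FullySymmetric (n : ℕ) (X : Finset (EuclideanSpace ℝ (Fin n)))
    (w : EuclideanSpace ℝ (Fin n) → ℝ) : Prop :=
  ∀ g : Equiv.Perm (Fin n), ∀ ε : Fin n → Bool, ∀ x ∈ X,
    signedPerm n g ε x ∈ X ∧ w (signedPerm n g ε x) = w x

/-- The generalized regular hyperoctahedron `I^n_k`: vectors with entries in `{-1,0,1}`
having exactly `k` nonzero coordinates. -/
def hyperOct (n k : ℕ) : Finset (EuclideanSpace ℝ (Fin n)) :=
  ((Fintype.piFinset fun _ : Fin n => ({-1, 0, 1} : Finset ℝ)).image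
    (WithLp.toLp 2 : (Fin n → ℝ) → EuclideanSpace ℝ (Fin n))).filter
    (fun x => (Finset.univ.filter fun i => x i ≠ 0).card = k)

/-- The layer `(r/√k) · I^n_k`. -/
def scaledOct (n k : ℕ) (r : ℝ) : Finset (EuclideanSpace ℝ (Fin n)) :=
  (hyperOct n k).image fun x => (r / Real.sqrt k) • x

/-- The union `X(J) = ⋃_{k ∈ J} (r_k/√k) · I^n_k`. -/
def octUnion (n : ℕ) (J : Finset ℕ) (r : ℕ → ℝ) : Finset (EuclideanSpace ℝ (Fin n)) :=
  J.biUnion fun k => scaledOct n k (r k)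

/-- The weight function which is the constant `wt k` on the layer `(r_k/√k) · I^n_k`. -/
def octWeight (n : ℕ) (J : Finset ℕ) (r : ℕ → ℝ) (wt : ℕ → ℝ) :
    EuclideanSpace ℝ (Fin n) → ℝ :=
  fun x => ∑ k ∈ J, if x ∈ scaledOct n k (r k) then wt k else 0

/-- `G(k₁,k₂) = (n+2-3k₁)(n+2-3k₂) + 6(k₁-1)(k₂-1) + 2(n-1)`. -/
def Gfun (n k₁ k₂ : ℤ) : ℤ :=
  (n + 2 - 3 * k₁) * (n + 2 - 3 * k₂) + 6 * (k₁ - 1) * (k₂ - 1) + 2 * (n - 1)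

/-- `p_k = k(1 - 3(k-1)/(n-1))`. -/
def pfun (n k : ℚ) : ℚ := k * (1 - 3 * (k - 1) / (n - 1))

/-- `q_k = 3(1 - 15(k-1)/(n-1) + 30(k-1)(k-2)/((n-1)(n-2)))`. -/
def qfun (n k : ℚ) : ℚ :=
  3 * (1 - 15 * (k - 1) / (n - 1) + 30 * (k - 1) * (k - 2) / ((n - 1) * (n - 2)))

/-- `f_{4,2}`. -/
def f42 (a b : ℝ) : ℝ := a ^ 4 - 6 * a ^ 2 * b ^ 2 + b ^ 4

/-- `f_{6,3}`. -/
def f63 (a b c : ℝ) : ℝ :=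
  2 * (a ^ 6 + b ^ 6 + c ^ 6) -
    15 * (a ^ 4 * b ^ 2 + a ^ 2 * b ^ 4 + a ^ 4 * c ^ 2 + a ^ 2 * c ^ 4 +
      b ^ 4 * c ^ 2 + b ^ 2 * c ^ 4) + 180 * a ^ 2 * b ^ 2 * c ^ 2

/-- `f_{8,2}`. -/
def f82 (a b : ℝ) : ℝ :=
  a ^ 8 - 28 * a ^ 6 * b ^ 2 + 70 * a ^ 4 * b ^ 4 - 28 * a ^ 2 * b ^ 6 + b ^ 8

/-- `f_{8,4}`. -/
def f84 (a b c d : ℝ) : ℝ :=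
  3 * (a ^ 8 + b ^ 8 + c ^ 8 + d ^ 8) -
    28 * (a ^ 6 * b ^ 2 + a ^ 6 * c ^ 2 + a ^ 6 * d ^ 2 +
      b ^ 6 * a ^ 2 + b ^ 6 * c ^ 2 + b ^ 6 * d ^ 2 +
      c ^ 6 * a ^ 2 + c ^ 6 * b ^ 2 + c ^ 6 * d ^ 2 +
      d ^ 6 * a ^ 2 + d ^ 6 * b ^ 2 + d ^ 6 * c ^ 2) +
    210 * (a ^ 4 * b ^ 2 * c ^ 2 + a ^ 4 * b ^ 2 * d ^ 2 + a ^ 4 * c ^ 2 * d ^ 2 +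
      b ^ 4 * a ^ 2 * c ^ 2 + b ^ 4 * a ^ 2 * d ^ 2 + b ^ 4 * c ^ 2 * d ^ 2 +
      c ^ 4 * a ^ 2 * b ^ 2 + c ^ 4 * a ^ 2 * d ^ 2 + c ^ 4 * b ^ 2 * d ^ 2 +
      d ^ 4 * a ^ 2 * b ^ 2 + d ^ 4 * a ^ 2 * c ^ 2 + d ^ 4 * b ^ 2 * c ^ 2) -
    3780 * a ^ 2 * b ^ 2 * c ^ 2 * d ^ 2

end

section Aux
open Bornology
open scoped ENNReal NNReal
noncomputable section


lemma esq {k : ℕ} (x : EuclideanSpace ℝ (Fin k)) : ‖x‖ ^ 2 = ∑ i, (x i) ^ 2 := by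
  rw [EuclideanSpace.norm_eq, Real.sq_sqrt (by positivity)]
  simp [sq_abs]

lemma bounded_hausdorff_lt_top (m : ℕ) {s : Set (EuclideanSpace ℝ (Fin m))}
    (hs : IsBounded s) : μH[(m : ℝ)] s < ⊤ := by
  set e := WithLp.equiv 2 (Fin m → ℝ)
  obtain ⟨K, hsymm⟩ : ∃ K, LipschitzWith K ⇑e.symm :=
    ⟨_, (PiLp.antilipschitzWith_ofLp 2 (fun _ : Fin m => ℝ)).to_rightInverse e.right_inv⟩
  have h1 : s = e.symm '' (e '' s) := by rw [Set.image_image]; simp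
  have h2 : μH[(m:ℝ)] s ≤ (K:ℝ≥0∞) ^ (m:ℝ) * μH[(m:ℝ)] (e '' s) := by
    nth_rewrite 1 [h1]
    exact hsymm.hausdorffMeasure_image_le (by positivity) _
  have h3 : (μH[(m:ℝ)] (e '' s) : ℝ≥0∞) = volume (e '' s) := by
    have := hausdorffMeasure_pi_real (ι := Fin m)
    rw [Fintype.card_fin] at this
    rw [this]
  have h4 : volume (e '' s) < ⊤ :=
    ((PiLp.lipschitzWith_ofLp 2 (fun _ : Fin m => ℝ)).isBounded_image hs).measure_lt_top
  calc μH[(m:ℝ)] s ≤ _ := h2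
    _ < ⊤ := by
        rw [h3]
        exact ENNReal.mul_lt_top (ENNReal.rpow_lt_top_of_nonneg (by positivity) ENNReal.coe_ne_top) h4

lemma closedBall_hausdorff_pos (m : ℕ) (hm : 1 ≤ m) {ρ : ℝ} (hρ : 0 < ρ) :
    0 < μH[(m : ℝ)] (closedBall (0 : EuclideanSpace ℝ (Fin m)) ρ) := by
  set e := WithLp.equiv 2 (Fin m → ℝ)
  have hm0 : (0:ℝ) < m := by exact_mod_cast hm
  have hsub : closedBall (0 : Fin m → ℝ) (ρ / m) ⊆
      e '' closedBall (0 : EuclideanSpace ℝ (Fin m)) ρ := by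
    intro z hz
    refine ⟨e.symm z, ?_, by simp⟩
    simp only [mem_closedBall, dist_zero_right] at hz ⊢
    have hz' : ∀ i, |z i| ≤ ρ / m := fun i => by
      calc |z i| = ‖z i‖ := rfl
        _ ≤ ‖z‖ := norm_le_pi_norm z i
        _ ≤ ρ / m := hz
    have hsq : ‖(e.symm z : EuclideanSpace ℝ (Fin m))‖ ^ 2 ≤ ρ ^ 2 := by
      rw [esq]
      have hterm : ∀ i, ((e.symm z : EuclideanSpace ℝ (Fin m)) i) ^ 2 ≤ (ρ / m) ^ 2 := fun i => by
        have : ((e.symm z : EuclideanSpace ℝ (Fin m)) i) = z i := rfl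
        rw [this, ← sq_abs]
        have h0 : (0:ℝ) ≤ |z i| := abs_nonneg _
        nlinarith [hz' i]
      have key : (m:ℝ) * (ρ / m) ^ 2 = ρ ^ 2 / m := by field_simp
      calc ∑ i, ((e.symm z : EuclideanSpace ℝ (Fin m)) i) ^ 2 ≤ ∑ _i : Fin m, (ρ / m) ^ 2 :=
            Finset.sum_le_sum fun i _ => hterm i
        _ = m * (ρ / m) ^ 2 := by simp [mul_comm]
        _ = ρ ^ 2 / m := key
        _ ≤ ρ ^ 2 := div_le_self (by positivity) (by exact_mod_cast hm)
    nlinarith [norm_nonneg (e.symm z : EuclideanSpace ℝ (Fin m))]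
  have h1 : (0:ℝ≥0∞) < volume (closedBall (0 : Fin m → ℝ) (ρ / m)) := by
    have : Nonempty (Fin m) := ⟨⟨0, hm⟩⟩
    exact measure_closedBall_pos _ _ (by positivity)
  have hpi : (volume : Measure (Fin m → ℝ)) = μH[(m:ℝ)] := by
    have := hausdorffMeasure_pi_real (ι := Fin m)
    rw [Fintype.card_fin] at this; rw [this]
  have h2 : volume (closedBall (0 : Fin m → ℝ) (ρ / m)) ≤
      μH[(m:ℝ)] (closedBall (0 : EuclideanSpace ℝ (Fin m)) ρ) := by
    calc volume (closedBall (0 : Fin m → ℝ) (ρ / m))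
        ≤ volume (e '' closedBall (0 : EuclideanSpace ℝ (Fin m)) ρ) := measure_mono hsub
      _ = μH[(m:ℝ)] (e '' closedBall (0 : EuclideanSpace ℝ (Fin m)) ρ) := by rw [hpi]
      _ ≤ 1 ^ (m:ℝ) * μH[(m:ℝ)] (closedBall (0 : EuclideanSpace ℝ (Fin m)) ρ) :=
          (PiLp.lipschitzWith_ofLp 2 (fun _ : Fin m => ℝ)).hausdorffMeasure_image_le
            (by positivity) _
      _ = _ := by simp
  exact lt_of_lt_of_le h1 h2



lemma signedPerm_comp_inv (n : ℕ) (g : Equiv.Perm (Fin n)) (ε : Fin n → Bool)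
    (x : EuclideanSpace ℝ (Fin n)) :
    signedPerm n g⁻¹ (fun i => ε (g⁻¹ i)) (signedPerm n g ε x) = x := by
  ext i
  simp only [signedPerm, (fun j => (Equiv.eq_symm_apply g).mp rfl : ∀ j, g (g⁻¹ j) = j)]
  cases ε (g⁻¹ i) <;> simp <;> exact congrArg x ((Equiv.eq_symm_apply g).mp rfl : g (g⁻¹ i) = i)

lemma signedPerm_inv_comp (n : ℕ) (g : Equiv.Perm (Fin n)) (ε : Fin n → Bool)
    (x : EuclideanSpace ℝ (Fin n)) :
    signedPerm n g ε (signedPerm n g⁻¹ (fun i => ε (g⁻¹ i)) x) = x := by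
  ext i
  simp only [signedPerm, (fun j => Equiv.Perm.inv_eq_iff_eq.mpr rfl : ∀ j, g⁻¹ (g j) = j)]
  cases ε i <;> simp <;> exact congrArg x (Equiv.Perm.inv_eq_iff_eq.mpr rfl : g⁻¹ (g i) = i)

/-- signed permutations as isometry equivs -/
def spIso (n : ℕ) (g : Equiv.Perm (Fin n)) (ε : Fin n → Bool) :
    EuclideanSpace ℝ (Fin n) ≃ᵢ EuclideanSpace ℝ (Fin n) where
  toFun := signedPerm n g ε
  invFun := signedPerm n g⁻¹ (fun i => ε (g⁻¹ i))
  left_inv := signedPerm_comp_inv n g ε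
  right_inv := signedPerm_inv_comp n g ε
  isometry_toFun := by
    apply Isometry.of_dist_eq
    intro x y
    rw [EuclideanSpace.dist_eq, EuclideanSpace.dist_eq]
    congr 1
    have h1 : ∀ i, dist (signedPerm n g ε x i) (signedPerm n g ε y i) ^ 2
        = dist (x (g i)) (y (g i)) ^ 2 := by
      intro i
      simp only [signedPerm]
      cases ε i <;> simp [neg_one_mul, dist_neg_neg]
    rw [Finset.sum_congr rfl fun i _ => h1 i]
    exact Equiv.sum_comp g (fun i => dist (x i) (y i) ^ 2)

lemma spIso_apply (n : ℕ) (g : Equiv.Perm (Fin n)) (ε : Fin n → Bool)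
    (x : EuclideanSpace ℝ (Fin n)) : spIso n g ε x = signedPerm n g ε x := rfl

lemma signedPerm_norm (n : ℕ) (g : Equiv.Perm (Fin n)) (ε : Fin n → Bool)
    (x : EuclideanSpace ℝ (Fin n)) : ‖signedPerm n g ε x‖ = ‖x‖ := by
  have h0 : signedPerm n g ε 0 = 0 := by
    ext i; simp only [signedPerm]; cases ε i <;> simp
  have := (spIso n g ε).isometry.dist_eq x 0
  rwa [spIso_apply, show (spIso n g ε) 0 = signedPerm n g ε 0 from rfl, h0,
    dist_zero_right, dist_zero_right] at this

section Rot
variable {n : ℕ}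

/-- rotation by 45 degrees (with a reflection) in the (0,1)-plane -/
def rotFun (n : ℕ) (h : 2 ≤ n) (x : EuclideanSpace ℝ (Fin n)) : EuclideanSpace ℝ (Fin n) :=
  WithLp.toLp 2 (fun i => if i = (⟨0, by omega⟩ : Fin n) then (x ⟨0, by omega⟩ + x ⟨1, by omega⟩) / Real.sqrt 2
    else if i = (⟨1, by omega⟩ : Fin n) then (x ⟨0, by omega⟩ - x ⟨1, by omega⟩) / Real.sqrt 2
    else x i)

lemma rot_aux1 (a b : ℝ) : ((a + b)/Real.sqrt 2 + (a - b)/Real.sqrt 2)/Real.sqrt 2 = a := by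
  have h : Real.sqrt 2 * Real.sqrt 2 = 2 := Real.mul_self_sqrt (by norm_num)
  rw [← add_div, div_div, h]; ring

lemma rot_aux2 (a b : ℝ) : ((a + b)/Real.sqrt 2 - (a - b)/Real.sqrt 2)/Real.sqrt 2 = b := by
  have h : Real.sqrt 2 * Real.sqrt 2 = 2 := Real.mul_self_sqrt (by norm_num)
  rw [div_sub_div_same, div_div, h]; ring

lemma rot_aux3 (u v : ℝ) : ((u + v)/Real.sqrt 2)^2 + ((u - v)/Real.sqrt 2)^2 = u^2 + v^2 := by
  have h : Real.sqrt 2 ^ 2 = 2 := Real.sq_sqrt (by norm_num)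
  rw [div_pow, div_pow, h]; ring

lemma rotFun_invol (h : 2 ≤ n) (x : EuclideanSpace ℝ (Fin n)) :
    rotFun n h (rotFun n h x) = x := by
  have h01 : (⟨0, by omega⟩ : Fin n) ≠ ⟨1, by omega⟩ := by
    intro hc; exact absurd (congrArg Fin.val hc) (by simp)
  ext i
  simp only [rotFun]
  by_cases h0 : i = (⟨0, by omega⟩ : Fin n)
  · subst h0
    simp [h01, h01.symm, rot_aux1]
  · by_cases h1 : i = (⟨1, by omega⟩ : Fin n)
    · subst h1
      simp [h01, h01.symm, rot_aux2]
    · simp [h0, h1]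

lemma rot_sum_sq (h : 2 ≤ n) (f g : Fin n → ℝ)
    (hf0 : ∀ i, i ≠ (⟨0, by omega⟩ : Fin n) → i ≠ (⟨1, by omega⟩ : Fin n) → f i = g i)
    (hmain : f ⟨0, by omega⟩ + f ⟨1, by omega⟩ = g ⟨0, by omega⟩ + g ⟨1, by omega⟩) :
    ∑ i, f i = ∑ i, g i := by
  have h01 : (⟨0, by omega⟩ : Fin n) ≠ ⟨1, by omega⟩ := by
    intro hc; exact absurd (congrArg Fin.val hc) (by simp)
  have key : ∀ u : Fin n → ℝ, ∑ i, u i = u ⟨0, by omega⟩ + u ⟨1, by omega⟩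
      + ∑ i ∈ (Finset.univ.erase ⟨0, by omega⟩).erase ⟨1, by omega⟩, u i := by
    intro u
    rw [← Finset.add_sum_erase _ u (Finset.mem_univ ⟨0, by omega⟩)]
    rw [← Finset.add_sum_erase _ u (Finset.mem_erase.2 ⟨h01.symm, Finset.mem_univ _⟩)]
    ring
  rw [key f, key g, hmain]
  congr 1
  apply Finset.sum_congr rfl
  intro i hi
  simp only [Finset.mem_erase] at hi
  exact hf0 i hi.2.1 hi.1

/-- the 45-degree rotation as an isometry equivalence -/
def rotIso (n : ℕ) (h : 2 ≤ n) :
    EuclideanSpace ℝ (Fin n) ≃ᵢ EuclideanSpace ℝ (Fin n) where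
  toFun := rotFun n h
  invFun := rotFun n h
  left_inv := rotFun_invol h
  right_inv := rotFun_invol h
  isometry_toFun := by
    have h01 : (⟨0, by omega⟩ : Fin n) ≠ ⟨1, by omega⟩ := by
      intro hc; exact absurd (congrArg Fin.val hc) (by simp)
    apply Isometry.of_dist_eq
    intro x y
    rw [EuclideanSpace.dist_eq, EuclideanSpace.dist_eq]
    congr 1
    apply rot_sum_sq h
    · intro i hi0 hi1
      simp [rotFun, hi0, hi1]
    · simp only [rotFun, if_pos rfl, if_neg h01, if_neg h01.symm, if_true]
      simp only [Real.dist_eq]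
      rw [sq_abs, sq_abs, sq_abs, sq_abs]
      rw [div_sub_div_same, div_sub_div_same]
      rw [show x ⟨0, by omega⟩ + x ⟨1, by omega⟩ - (y ⟨0, by omega⟩ + y ⟨1, by omega⟩)
          = (x ⟨0, by omega⟩ - y ⟨0, by omega⟩) + (x ⟨1, by omega⟩ - y ⟨1, by omega⟩) by ring,
        show x ⟨0, by omega⟩ - x ⟨1, by omega⟩ - (y ⟨0, by omega⟩ - y ⟨1, by omega⟩)
          = (x ⟨0, by omega⟩ - y ⟨0, by omega⟩) - (x ⟨1, by omega⟩ - y ⟨1, by omega⟩) by ring]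
      exact rot_aux3 _ _

lemma rotIso_norm (h : 2 ≤ n) (x : EuclideanSpace ℝ (Fin n)) : ‖rotFun n h x‖ = ‖x‖ := by
  have h0 : rotFun n h 0 = 0 := by
    ext i; simp only [rotFun]
    split <;> simp
  have := (rotIso n h).isometry.dist_eq x 0
  rwa [show (rotIso n h) x = rotFun n h x from rfl, show (rotIso n h) 0 = rotFun n h 0 from rfl,
    h0, dist_zero_right, dist_zero_right] at this

end Rot


variable {m : ℕ}

/-- embedding inserting a fixed coordinate -/
def insertMap (m : ℕ) (i : Fin (m+1)) (c : ℝ) (z : EuclideanSpace ℝ (Fin m)) :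
    EuclideanSpace ℝ (Fin (m+1)) :=
  (WithLp.equiv 2 (Fin (m+1) → ℝ)).symm (i.insertNth c (WithLp.equiv 2 (Fin m → ℝ) z))

lemma insertMap_apply (i : Fin (m+1)) (c : ℝ) (z : EuclideanSpace ℝ (Fin m)) (j : Fin (m+1)) :
    insertMap m i c z j = Fin.insertNth (α := fun _ => ℝ) i c (fun k => z k) j := rfl

lemma insert_isometry (i : Fin (m+1)) (c : ℝ) : Isometry (insertMap m i c) := by
  apply Isometry.of_dist_eq
  intro z w
  simp only [EuclideanSpace.dist_eq]
  congr 1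
  rw [Fin.sum_univ_succAbove _ i]
  have h1 : ∀ j, insertMap m i c z j = Fin.insertNth (α := fun _ => ℝ) i c (fun k => z k) j :=
    insertMap_apply i c z
  have h2 : ∀ j, insertMap m i c w j = Fin.insertNth (α := fun _ => ℝ) i c (fun k => w k) j :=
    insertMap_apply i c w
  simp [h1, h2, Fin.insertNth_apply_same, Fin.insertNth_apply_succAbove]

/-- projection dropping the first coordinate -/
def tailMap (m : ℕ) (x : EuclideanSpace ℝ (Fin (m+1))) : EuclideanSpace ℝ (Fin m) :=
  (WithLp.equiv 2 (Fin m → ℝ)).symm (fun j => x j.succ)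

lemma tailMap_apply (x : EuclideanSpace ℝ (Fin (m+1))) (j : Fin m) :
    tailMap m x j = x j.succ := rfl

lemma tail_lipschitz : LipschitzWith 1 (tailMap m) := by
  apply LipschitzWith.of_dist_le_mul
  intro x y
  rw [NNReal.coe_one, one_mul]
  simp only [EuclideanSpace.dist_eq]
  apply Real.sqrt_le_sqrt
  rw [Fin.sum_univ_succ]
  have hc : ∀ j, (tailMap m x j = x j.succ ∧ tailMap m y j = y j.succ) :=
    fun j => ⟨rfl, rfl⟩
  have : ∑ j : Fin m, dist (tailMap m x j) (tailMap m y j) ^ 2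
      = ∑ j : Fin m, dist (x j.succ) (y j.succ) ^ 2 := by
    apply Finset.sum_congr rfl; intro j _; rw [(hc j).1, (hc j).2]
  rw [this]
  have h0 : (0:ℝ) ≤ dist (x 0) (y 0) ^ 2 := by positivity
  exact le_add_of_nonneg_left h0

lemma radial_lipschitzOn (k : ℕ) {r : ℝ} (hr : 0 < r) :
    LipschitzOnWith 2 (fun x : EuclideanSpace ℝ (Fin k) => (r / ‖x‖) • x)
      {x | r ≤ ‖x‖} := by
  apply LipschitzOnWith.of_dist_le_mul
  intro x hx y hy
  simp only [Set.mem_setOf_eq] at hx hy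
  push_cast
  have hx0 : 0 < ‖x‖ := lt_of_lt_of_le hr hx
  have hy0 : 0 < ‖y‖ := lt_of_lt_of_le hr hy
  rw [dist_eq_norm, dist_eq_norm]
  have hsplit : (r / ‖x‖) • x - (r / ‖y‖) • y
      = (r / ‖x‖) • (x - y) + ((r / ‖x‖) - (r / ‖y‖)) • y := by
    rw [smul_sub, sub_smul]; abel
  rw [hsplit]
  have hr1 : r / ‖x‖ ≤ 1 := div_le_one_of_le₀ hx (le_of_lt hx0)
  have h1 : ‖(r / ‖x‖) • (x - y)‖ ≤ ‖x - y‖ := by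
    rw [norm_smul, Real.norm_eq_abs, abs_of_pos (by positivity)]
    nlinarith [norm_nonneg (x - y)]
  have h2 : ‖((r / ‖x‖) - (r / ‖y‖)) • y‖ ≤ ‖x - y‖ := by
    rw [norm_smul, Real.norm_eq_abs]
    have habs : |r / ‖x‖ - r / ‖y‖| = r * |‖y‖ - ‖x‖| / (‖x‖ * ‖y‖) := by
      rw [div_sub_div _ _ (ne_of_gt hx0) (ne_of_gt hy0), abs_div,
        abs_of_pos (by positivity : (0:ℝ) < ‖x‖ * ‖y‖),
        show r * ‖y‖ - ‖x‖ * r = r * (‖y‖ - ‖x‖) by ring, abs_mul, abs_of_pos hr]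
    rw [habs]
    have hnn : |‖y‖ - ‖x‖| ≤ ‖x - y‖ := by
      rw [abs_sub_comm]; exact abs_norm_sub_norm_le x y
    calc r * |‖y‖ - ‖x‖| / (‖x‖ * ‖y‖) * ‖y‖ = (r / ‖x‖) * |‖y‖ - ‖x‖| := by
          field_simp
      _ ≤ 1 * ‖x - y‖ := mul_le_mul hr1 hnn (abs_nonneg _) one_pos.le
      _ = ‖x - y‖ := one_mul _
  calc ‖(r / ‖x‖) • (x - y) + ((r / ‖x‖) - (r / ‖y‖)) • y‖
      ≤ ‖(r / ‖x‖) • (x - y)‖ + ‖((r / ‖x‖) - (r / ‖y‖)) • y‖ := norm_add_le _ _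
    _ ≤ ‖x - y‖ + ‖x - y‖ := add_le_add h1 h2
    _ = 2 * ‖x - y‖ := by ring

section Sphere

variable {m : ℕ}

theorem sphere_hausdorff_pos (hm : 1 ≤ m) {r : ℝ} (hr : 0 < r) :
    0 < μH[(m:ℝ)] (sphere (0 : EuclideanSpace ℝ (Fin (m+1))) r) := by
  have himg : closedBall (0 : EuclideanSpace ℝ (Fin m)) r ⊆
      tailMap m '' sphere (0 : EuclideanSpace ℝ (Fin (m+1))) r := by
    intro z hz
    rw [mem_closedBall_zero_iff] at hz
    have hz2 : ‖z‖ ^ 2 ≤ r ^ 2 := by nlinarith [norm_nonneg z]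
    set a := Real.sqrt (r ^ 2 - ‖z‖ ^ 2) with ha
    have ha2 : a ^ 2 = r ^ 2 - ‖z‖ ^ 2 := Real.sq_sqrt (by linarith)
    refine ⟨insertMap m 0 a z, ?_, ?_⟩
    · rw [mem_sphere_zero_iff_norm]
      have hsq : ‖insertMap m 0 a z‖ ^ 2 = r ^ 2 := by
        rw [esq, Fin.sum_univ_succAbove _ 0]
        have h1 : insertMap m 0 a z 0 = a := by
          rw [insertMap_apply]; exact Fin.insertNth_apply_same (α := fun _ => ℝ) 0 a _
        have h2 : ∀ j : Fin m, insertMap m 0 a z ((0:Fin (m+1)).succAbove j) = z j := by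
          intro j; rw [insertMap_apply]
          exact Fin.insertNth_apply_succAbove (α := fun _ => ℝ) 0 a _ j
        rw [h1, Finset.sum_congr rfl fun j _ => by rw [h2 j]]
        rw [← esq, ha2]; ring
      have h0 : (0:ℝ) ≤ ‖insertMap m 0 a z‖ := norm_nonneg _
      nlinarith
    · ext j
      rw [tailMap_apply, insertMap_apply]
      have : (0:Fin (m+1)).succAbove j = j.succ := by
        simp [Fin.succAbove]
      rw [← this]
      exact Fin.insertNth_apply_succAbove (α := fun _ => ℝ) 0 a _ j
  calc (0:ℝ≥0∞) < μH[(m:ℝ)] (closedBall (0 : EuclideanSpace ℝ (Fin m)) r) :=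
        closedBall_hausdorff_pos m hm hr
    _ ≤ μH[(m:ℝ)] (tailMap m '' sphere (0 : EuclideanSpace ℝ (Fin (m+1))) r) :=
        measure_mono himg
    _ ≤ 1 ^ (m:ℝ) * μH[(m:ℝ)] (sphere (0 : EuclideanSpace ℝ (Fin (m+1))) r) :=
        tail_lipschitz.hausdorffMeasure_image_le (by positivity) _
    _ = μH[(m:ℝ)] (sphere (0 : EuclideanSpace ℝ (Fin (m+1))) r) := by simp

theorem sphere_hausdorff_lt_top {r : ℝ} (hr : 0 < r) :
    μH[(m:ℝ)] (sphere (0 : EuclideanSpace ℝ (Fin (m+1))) r) < ⊤ := by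
  classical
  set E1 := EuclideanSpace ℝ (Fin (m+1))
  set ρ : E1 → E1 := fun x => (r / ‖x‖) • x with hρdef
  set R : ℝ := r * (m+1) with hR
  set T : Fin (m+1) → Bool → Set E1 := fun i b =>
    {x : E1 | x i = (if b then -r else r)} ∩ ({x : E1 | r ≤ ‖x‖} ∩ closedBall 0 R) with hT
  have hcover : sphere (0:E1) r ⊆ ⋃ i, ⋃ b, ρ '' (T i b) := by
    intro y hy
    rw [mem_sphere_zero_iff_norm] at hy
    have hsum : ∑ k, (y k) ^ 2 = r ^ 2 := by rw [← esq, hy]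
    have hex : ∃ i, r ^ 2 ≤ ((m:ℝ)+1) * (y i) ^ 2 := by
      by_contra hcon
      push_neg at hcon
      have : ∑ k, ((m:ℝ)+1) * (y k)^2 < ∑ _k : Fin (m+1), r ^ 2 :=
        Finset.sum_lt_sum_of_nonempty Finset.univ_nonempty fun k _ => hcon k
      rw [← Finset.mul_sum, hsum, Finset.sum_const] at this
      simp only [Finset.card_univ, Fintype.card_fin, nsmul_eq_mul] at this
      push_cast at this
      nlinarith
    obtain ⟨i, hi⟩ := hex
    have hyi2 : (y i) ^ 2 ≤ r ^ 2 := by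
      calc (y i)^2 ≤ ∑ k, (y k)^2 :=
        Finset.single_le_sum (fun k _ => sq_nonneg (y k)) (Finset.mem_univ i)
      _ = r ^ 2 := hsum
    have hyi0 : y i ≠ 0 := by
      intro h0; rw [h0] at hi; simp at hi; nlinarith
    have habs : 0 < |y i| := abs_pos.2 hyi0
    have habsr : |y i| ≤ r := by nlinarith [sq_abs (y i)]
    have hbig : r ≤ ((m:ℝ)+1) * |y i| := by nlinarith [sq_abs (y i), sq_nonneg (((m:ℝ)+1) * |y i| - r)]
    set c : ℝ := r / |y i| with hc
    have hc0 : 0 < c := div_pos hr habs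
    have hc1 : 1 ≤ c := (one_le_div habs).2 habsr
    set x : E1 := c • y with hx
    have hnx : ‖x‖ = c * r := by rw [hx, norm_smul, Real.norm_eq_abs, abs_of_pos hc0, hy]
    have hxi : x i = c * y i := rfl
    have hxmem : x ∈ T i (decide (y i < 0)) := by
      refine ⟨?_, ?_, ?_⟩
      · show x i = _
        rw [hxi, hc]
        by_cases hneg : y i < 0
        · have h2 : decide (y i < 0) = true := decide_eq_true hneg
          rw [h2, if_pos rfl, abs_of_neg hneg, div_neg, neg_mul, div_mul_cancel₀ r hyi0]
        · have hpos : 0 < y i := lt_of_le_of_ne (not_lt.1 hneg) (Ne.symm hyi0)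
          have h2 : decide (y i < 0) = false := decide_eq_false hneg
          rw [h2, if_neg (by simp), abs_of_pos hpos, div_mul_cancel₀ r hyi0]
      · show r ≤ ‖x‖
        rw [hnx]; nlinarith
      · rw [mem_closedBall_zero_iff, hnx, hR, hc]
        rw [div_mul_eq_mul_div, div_le_iff₀ habs]
        nlinarith
    have hρx : ρ x = y := by
      rw [hρdef]
      show (r / ‖x‖) • x = y
      rw [hnx, hx, smul_smul]
      have hcne : c ≠ 0 := ne_of_gt hc0
      have hrne : r ≠ 0 := ne_of_gt hr
      have : r / (c * r) * c = 1 := by field_simp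
      rw [this, one_smul]
    exact Set.mem_iUnion.2 ⟨i, Set.mem_iUnion.2 ⟨decide (y i < 0), ⟨x, hxmem, hρx⟩⟩⟩
  have hTfin : ∀ i b, μH[(m:ℝ)] (T i b) < ⊤ := by
    intro i b
    set v : ℝ := if b then -r else r with hv
    have hface : T i b ⊆ insertMap m i v '' closedBall 0 R := by
      rintro x ⟨hx1, _, hx3⟩
      rw [mem_closedBall_zero_iff] at hx3
      set z : EuclideanSpace ℝ (Fin m) :=
        (WithLp.equiv 2 (Fin m → ℝ)).symm (fun j => x (i.succAbove j)) with hzdef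
      have hzj : ∀ j, z j = x (i.succAbove j) := fun j => rfl
      refine ⟨z, ?_, ?_⟩
      · rw [mem_closedBall_zero_iff]
        have h1 : ‖z‖ ^ 2 ≤ ‖x‖ ^ 2 := by
          rw [esq, esq, Fin.sum_univ_succAbove _ i]
          rw [Finset.sum_congr rfl fun j _ => by rw [hzj j]]
          nlinarith [sq_nonneg (x i)]
        nlinarith [norm_nonneg z, norm_nonneg x, hx3, hr]
      · ext k
        by_cases hk : k = i
        · subst hk
          rw [insertMap_apply]
          rw [Fin.insertNth_apply_same]
          exact hx1.symm
        · obtain ⟨j, hj⟩ := Fin.exists_succAbove_eq hk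
          rw [← hj, insertMap_apply, Fin.insertNth_apply_succAbove]
          exact (hzj j).symm
    calc μH[(m:ℝ)] (T i b) ≤ μH[(m:ℝ)] (insertMap m i v '' closedBall 0 R) :=
          measure_mono hface
      _ ≤ 1 ^ (m:ℝ) * μH[(m:ℝ)] (closedBall (0 : EuclideanSpace ℝ (Fin m)) R) :=
          (insert_isometry i v).lipschitz.hausdorffMeasure_image_le (by positivity) _
      _ < ⊤ := by
          rw [ENNReal.one_rpow, one_mul]
          exact bounded_hausdorff_lt_top m (isBounded_closedBall)
  have himgfin : ∀ i b, μH[(m:ℝ)] (ρ '' T i b) < ⊤ := by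
    intro i b
    have hsub : T i b ⊆ {x : E1 | r ≤ ‖x‖} := fun x hx => hx.2.1
    have hlip : LipschitzOnWith 2 ρ (T i b) := (radial_lipschitzOn (m+1) hr).mono hsub
    have hle := hlip.hausdorffMeasure_image_le (show (0:ℝ) ≤ (m:ℝ) by positivity)
    exact lt_of_le_of_lt hle (ENNReal.mul_lt_top
      (ENNReal.rpow_lt_top_of_nonneg (by positivity) ENNReal.coe_ne_top) (hTfin i b))
  calc μH[(m:ℝ)] (sphere (0:E1) r) ≤ μH[(m:ℝ)] (⋃ i, ⋃ b, ρ '' (T i b)) := measure_mono hcover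
    _ ≤ ∑' i : Fin (m+1), μH[(m:ℝ)] (⋃ b, ρ '' (T i b)) := measure_iUnion_le _
    _ ≤ ∑' i : Fin (m+1), ∑' b : Bool, μH[(m:ℝ)] (ρ '' (T i b)) :=
        ENNReal.tsum_le_tsum fun i => measure_iUnion_le _
    _ < ⊤ := by
        rw [tsum_fintype]
        apply ENNReal.sum_lt_top.2
        intro i _
        rw [tsum_fintype]
        apply ENNReal.sum_lt_top.2
        intro b _
        exact himgfin i b

theorem sphere_hausdorff_ne (n : ℕ) (hn : 2 ≤ n) {r : ℝ} (hr : 0 < r) :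
    μH[(n:ℝ)-1] (sphere (0 : EuclideanSpace ℝ (Fin n)) r) ≠ 0 ∧
    μH[(n:ℝ)-1] (sphere (0 : EuclideanSpace ℝ (Fin n)) r) ≠ ⊤ := by
  obtain ⟨m, rfl⟩ : ∃ m, n = m + 1 := ⟨n-1, by omega⟩
  have hcast : ((m+1:ℕ):ℝ) - 1 = (m:ℝ) := by push_cast; ring
  rw [hcast]
  exact ⟨(sphere_hausdorff_pos (by omega) hr).ne',
    (sphere_hausdorff_lt_top hr).ne⟩

end Sphere

end
end Aux


section IntLayer
open Bornology
open scoped ENNReal NNReal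

noncomputable section

variable {n : ℕ}

lemma integral_comp_iso (e : EuclideanSpace ℝ (Fin n) ≃ᵢ EuclideanSpace ℝ (Fin n))
    (hnorm : ∀ x, ‖e x‖ = ‖x‖) (r : ℝ) (f : EuclideanSpace ℝ (Fin n) → ℝ) :
    ∫ x in sphere (0 : EuclideanSpace ℝ (Fin n)) r, f (e x) ∂μH[(n:ℝ)-1]
      = ∫ x in sphere (0 : EuclideanSpace ℝ (Fin n)) r, f x ∂μH[(n:ℝ)-1] := by
  have hpre : e ⁻¹' (sphere (0 : EuclideanSpace ℝ (Fin n)) r)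
      = sphere (0 : EuclideanSpace ℝ (Fin n)) r := by
    ext x
    simp only [Set.mem_preimage, mem_sphere_zero_iff_norm, hnorm]
  have h := (e.measurePreserving_hausdorffMeasure ((n:ℝ)-1)).setIntegral_preimage_emb
    e.toHomeomorph.measurableEmbedding f (sphere (0 : EuclideanSpace ℝ (Fin n)) r)
  rw [hpre] at h
  exact h

lemma integral_sphere_zero_of_odd (e : EuclideanSpace ℝ (Fin n) ≃ᵢ EuclideanSpace ℝ (Fin n))
    (hnorm : ∀ x, ‖e x‖ = ‖x‖) (f : EuclideanSpace ℝ (Fin n) → ℝ)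
    (hodd : ∀ x, f (e x) = - f x) (r : ℝ) :
    ∫ x in sphere (0 : EuclideanSpace ℝ (Fin n)) r, f x ∂μH[(n:ℝ)-1] = 0 := by
  have h1 := integral_comp_iso e hnorm r f
  have h2 : (∫ x in sphere (0 : EuclideanSpace ℝ (Fin n)) r, f (e x) ∂μH[(n:ℝ)-1])
      = - ∫ x in sphere (0 : EuclideanSpace ℝ (Fin n)) r, f x ∂μH[(n:ℝ)-1] := by
    calc (∫ x in sphere (0 : EuclideanSpace ℝ (Fin n)) r, f (e x) ∂μH[(n:ℝ)-1])
        = ∫ x in sphere (0 : EuclideanSpace ℝ (Fin n)) r, -(f x) ∂μH[(n:ℝ)-1] := by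
          simp_rw [hodd]
      _ = - ∫ x in sphere (0 : EuclideanSpace ℝ (Fin n)) r, f x ∂μH[(n:ℝ)-1] := integral_neg f
  rw [h2] at h1
  linarith

lemma sphereAvg_def (r : ℝ) (f : EuclideanSpace ℝ (Fin n) → ℝ) :
    sphereAvg n r f = (μH[(n:ℝ)-1] (sphere (0 : EuclideanSpace ℝ (Fin n)) r)).toReal⁻¹
      • ∫ x in sphere (0 : EuclideanSpace ℝ (Fin n)) r, f x ∂μH[(n:ℝ)-1] := by
  rw [sphereAvg, setAverage_eq, measureReal_def]

lemma sphere_vol_pos (hn : 2 ≤ n) {r : ℝ} (hr : 0 < r) :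
    0 < (μH[(n:ℝ)-1] (sphere (0 : EuclideanSpace ℝ (Fin n)) r)).toReal := by
  obtain ⟨h0, htop⟩ := sphere_hausdorff_ne n hn hr
  exact ENNReal.toReal_pos h0 htop

lemma sphereAvg_comp_iso (e : EuclideanSpace ℝ (Fin n) ≃ᵢ EuclideanSpace ℝ (Fin n))
    (hnorm : ∀ x, ‖e x‖ = ‖x‖) (r : ℝ) (f : EuclideanSpace ℝ (Fin n) → ℝ) :
    sphereAvg n r (fun x => f (e x)) = sphereAvg n r f := by
  rw [sphereAvg_def, sphereAvg_def, integral_comp_iso e hnorm r f]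

lemma sphereAvg_zero_of_odd (e : EuclideanSpace ℝ (Fin n) ≃ᵢ EuclideanSpace ℝ (Fin n))
    (hnorm : ∀ x, ‖e x‖ = ‖x‖) (f : EuclideanSpace ℝ (Fin n) → ℝ)
    (hodd : ∀ x, f (e x) = - f x) (r : ℝ) : sphereAvg n r f = 0 := by
  rw [sphereAvg_def, integral_sphere_zero_of_odd e hnorm f hodd r, smul_zero]

lemma sphereAvg_congr {r : ℝ} {f g : EuclideanSpace ℝ (Fin n) → ℝ}
    (h : ∀ x ∈ sphere (0 : EuclideanSpace ℝ (Fin n)) r, f x = g x) :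
    sphereAvg n r f = sphereAvg n r g := by
  rw [sphereAvg_def, sphereAvg_def,
    setIntegral_congr_fun isClosed_sphere.measurableSet h]

lemma sphereAvg_const (hn : 2 ≤ n) {r : ℝ} (hr : 0 < r) (c : ℝ) :
    sphereAvg n r (fun _ => c) = c := by
  rw [sphereAvg_def, setIntegral_const, measureReal_def, smul_smul,
    inv_mul_cancel₀ (ne_of_gt (sphere_vol_pos hn hr)), one_smul]

lemma integrableOn_sphere (hn : 2 ≤ n) {r : ℝ} (hr : 0 < r)
    {f : EuclideanSpace ℝ (Fin n) → ℝ} (hf : Continuous f) :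
    IntegrableOn f (sphere (0 : EuclideanSpace ℝ (Fin n)) r) μH[(n:ℝ)-1] := by
  obtain ⟨C, hC⟩ := (isCompact_sphere (0 : EuclideanSpace ℝ (Fin n)) r).exists_bound_of_continuousOn
    hf.continuousOn
  apply Measure.integrableOn_of_bounded (sphere_hausdorff_ne n hn hr).2
    hf.aestronglyMeasurable (M := C)
  filter_upwards [ae_restrict_mem isClosed_sphere.measurableSet] with x hx using hC x hx

lemma sphereAvg_finsum {ι : Type*} (r : ℝ) (s : Finset ι)
    (F : ι → EuclideanSpace ℝ (Fin n) → ℝ)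
    (hint : ∀ a ∈ s, IntegrableOn (F a) (sphere (0 : EuclideanSpace ℝ (Fin n)) r) μH[(n:ℝ)-1]) :
    sphereAvg n r (fun x => ∑ a ∈ s, F a x) = ∑ a ∈ s, sphereAvg n r (F a) := by
  simp only [sphereAvg_def]
  rw [integral_finset_sum s hint, Finset.smul_sum]

lemma sphereAvg_add {r : ℝ} {f g : EuclideanSpace ℝ (Fin n) → ℝ}
    (hf : IntegrableOn f (sphere (0 : EuclideanSpace ℝ (Fin n)) r) μH[(n:ℝ)-1])
    (hg : IntegrableOn g (sphere (0 : EuclideanSpace ℝ (Fin n)) r) μH[(n:ℝ)-1]) :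
    sphereAvg n r (fun x => f x + g x) = sphereAvg n r f + sphereAvg n r g := by
  simp only [sphereAvg_def]
  rw [integral_add hf hg, smul_add]

lemma sphereAvg_const_mul {r : ℝ} (c : ℝ) (f : EuclideanSpace ℝ (Fin n) → ℝ) :
    sphereAvg n r (fun x => c * f x) = c * sphereAvg n r f := by
  simp only [sphereAvg_def]
  rw [integral_const_mul, smul_eq_mul, smul_eq_mul]
  ring

lemma cont_coord_pow (i : Fin n) (k : ℕ) :
    Continuous (fun x : EuclideanSpace ℝ (Fin n) => x i ^ k) :=
  ((EuclideanSpace.proj (𝕜 := ℝ) i).continuous).pow k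

lemma cont_coord_cross (i j : Fin n) (k l : ℕ) :
    Continuous (fun x : EuclideanSpace ℝ (Fin n) => x i ^ k * x j ^ l) :=
  (cont_coord_pow i k).mul (cont_coord_pow j l)

end

end IntLayer


section AvgComp
open Bornology
open scoped ENNReal NNReal
noncomputable section

variable {n : ℕ}

lemma exists_swap_pair {a b c d : Fin n} (hab : a ≠ b) (hcd : c ≠ d) :
    ∃ g : Equiv.Perm (Fin n), g a = c ∧ g b = d := by
  have hta : Equiv.swap a c d ≠ a := by
    intro h
    have h2 : d = c := by
      rw [← Equiv.swap_apply_self a c d, h, Equiv.swap_apply_left]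
    exact hcd h2.symm
  refine ⟨(Equiv.swap b (Equiv.swap a c d)).trans (Equiv.swap a c), ?_, ?_⟩
  · rw [Equiv.trans_apply, Equiv.swap_apply_of_ne_of_ne hab (Ne.symm hta), Equiv.swap_apply_left]
  · rw [Equiv.trans_apply, Equiv.swap_apply_left, Equiv.swap_apply_self]

lemma avg_pow_eq (r : ℝ) (k : ℕ) (i j : Fin n) :
    sphereAvg n r (fun x => x i ^ k) = sphereAvg n r (fun x => x j ^ k) := by
  have hcomp := sphereAvg_comp_iso (spIso n (Equiv.swap j i) (fun _ => false))
    (fun x => signedPerm_norm n _ _ x) r (fun y => y j ^ k)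
  have hpt : (fun x => ((spIso n (Equiv.swap j i) (fun _ => false)) x) j ^ k)
      = fun x : EuclideanSpace ℝ (Fin n) => x i ^ k := by
    funext x
    rw [spIso_apply]
    simp only [signedPerm, Equiv.Perm.one_apply, if_neg Bool.false_ne_true, one_mul,
      Bool.false_eq_true, if_false]
    exact congrArg (fun t => x t ^ k) (Equiv.swap_apply_left j i)
  rw [← hpt]
  exact hcomp

lemma avg_cross_eq (r : ℝ) {i j i' j' : Fin n} (hij : i ≠ j) (hij' : i' ≠ j') :
    sphereAvg n r (fun x => x i ^ 2 * x j ^ 2)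
      = sphereAvg n r (fun x => x i' ^ 2 * x j' ^ 2) := by
  obtain ⟨g, hg1, hg2⟩ := exists_swap_pair hij' hij
  have hcomp := sphereAvg_comp_iso (spIso n g (fun _ => false))
    (fun x => signedPerm_norm n _ _ x) r (fun y => y i' ^ 2 * y j' ^ 2)
  have hpt : (fun x => ((spIso n g (fun _ => false)) x) i' ^ 2
        * ((spIso n g (fun _ => false)) x) j' ^ 2)
      = fun x : EuclideanSpace ℝ (Fin n) => x i ^ 2 * x j ^ 2 := by
    funext x
    rw [spIso_apply]
    simp only [signedPerm, Bool.false_eq_true, if_false, one_mul]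
    rw [show (g i' : Fin n) = i from hg1, show (g j' : Fin n) = j from hg2]
  rw [← hpt]
  exact hcomp

lemma avg_sq (hn : 2 ≤ n) {r : ℝ} (hr : 0 < r) (i : Fin n) :
    sphereAvg n r (fun x => x i ^ 2) = r ^ 2 / n := by
  have hn0 : (0:ℝ) < n := by
    have : (2:ℝ) ≤ n := by exact_mod_cast hn
    linarith
  have hsum : ∑ j : Fin n, sphereAvg n r (fun x => x j ^ 2) = r ^ 2 := by
    rw [← sphereAvg_finsum r Finset.univ (fun j x => x j ^ 2)
      (fun j _ => integrableOn_sphere hn hr (cont_coord_pow j 2))]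
    rw [sphereAvg_congr (g := fun _ => r ^ 2) ?_]
    · exact sphereAvg_const hn hr _
    · intro x hx
      rw [mem_sphere_zero_iff_norm] at hx
      rw [← esq, hx]
  have hall : ∀ j : Fin n, sphereAvg n r (fun x => x j ^ 2)
      = sphereAvg n r (fun x => x i ^ 2) := fun j => avg_pow_eq r 2 j i
  rw [Finset.sum_congr rfl (fun j _ => hall j), Finset.sum_const, Finset.card_univ,
    Fintype.card_fin, nsmul_eq_mul] at hsum
  field_simp
  linarith

lemma f42_rot (a b : ℝ) :
    f42 ((a + b) / Real.sqrt 2) ((a - b) / Real.sqrt 2) = - f42 a b := by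
  have h2 : Real.sqrt 2 ^ 2 = 2 := Real.sq_sqrt (by norm_num)
  have h4 : Real.sqrt 2 ^ 4 = 4 := by
    have h : Real.sqrt 2 ^ 4 = (Real.sqrt 2 ^ 2) ^ 2 := by ring
    rw [h, h2]; norm_num
  simp only [f42, div_pow, h2, h4]
  ring

lemma rotFun_apply0 (h : 2 ≤ n) (x : EuclideanSpace ℝ (Fin n)) :
    rotFun n h x ⟨0, by omega⟩ = (x ⟨0, by omega⟩ + x ⟨1, by omega⟩) / Real.sqrt 2 := by
  simp [rotFun]

lemma rotFun_apply1 (h : 2 ≤ n) (x : EuclideanSpace ℝ (Fin n)) :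
    rotFun n h x ⟨1, by omega⟩ = (x ⟨0, by omega⟩ - x ⟨1, by omega⟩) / Real.sqrt 2 := by
  have h01 : (⟨1, by omega⟩ : Fin n) ≠ ⟨0, by omega⟩ := by
    intro hc; exact absurd (congrArg Fin.val hc) (by simp)
  simp [rotFun, h01]

lemma avg_f42_zero (hn : 2 ≤ n) (r : ℝ) :
    sphereAvg n r (fun x => f42 (x ⟨0, by omega⟩) (x ⟨1, by omega⟩)) = 0 := by
  apply sphereAvg_zero_of_odd (rotIso n hn) (rotIso_norm hn)
  intro x
  show f42 ((rotFun n hn x) ⟨0, by omega⟩) ((rotFun n hn x) ⟨1, by omega⟩) = _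
  rw [rotFun_apply0, rotFun_apply1]
  exact f42_rot _ _

lemma avg_quartic (hn : 2 ≤ n) {r : ℝ} (hr : 0 < r) :
    (∀ i : Fin n, sphereAvg n r (fun x => x i ^ 4) = 3 * r ^ 4 / (n * (n + 2)))
    ∧ (∀ i j : Fin n, i ≠ j →
        sphereAvg n r (fun x => x i ^ 2 * x j ^ 2) = r ^ 4 / (n * (n + 2))) := by
  have hn0 : (0:ℝ) < n := by
    have : (2:ℝ) ≤ n := by exact_mod_cast hn
    linarith
  have hne : (n:ℝ) * ((n:ℝ) + 2) ≠ 0 := by positivity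
  set i0 : Fin n := ⟨0, by omega⟩ with hi0
  set i1 : Fin n := ⟨1, by omega⟩ with hi1
  have h01 : i0 ≠ i1 := by
    intro hc; exact absurd (congrArg Fin.val hc) (by simp [hi0, hi1])
  set A := sphereAvg n r (fun x => x i0 ^ 4) with hA
  set B := sphereAvg n r (fun x => x i0 ^ 2 * x i1 ^ 2) with hB
  have hallA : ∀ i, sphereAvg n r (fun x => x i ^ 4) = A := fun i => avg_pow_eq r 4 i i0
  have hallB : ∀ i j, i ≠ j → sphereAvg n r (fun x => x i ^ 2 * x j ^ 2) = B :=
    fun i j hij => avg_cross_eq r hij h01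
  have hint4 : ∀ i : Fin n, IntegrableOn (fun x : EuclideanSpace ℝ (Fin n) => x i ^ 4)
      (sphere (0 : EuclideanSpace ℝ (Fin n)) r) μH[(n:ℝ)-1] :=
    fun i => integrableOn_sphere hn hr (cont_coord_pow i 4)
  have hintc : ∀ i j : Fin n,
      IntegrableOn (fun x : EuclideanSpace ℝ (Fin n) => x i ^ 2 * x j ^ 2)
      (sphere (0 : EuclideanSpace ℝ (Fin n)) r) μH[(n:ℝ)-1] :=
    fun i j => integrableOn_sphere hn hr (cont_coord_cross i j 2 2)
  -- rotation identity
  have hA3 : A = 3 * B := by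
    have hz : sphereAvg n r (fun x => f42 (x i0) (x i1)) = 0 := avg_f42_zero hn r
    have hexp : sphereAvg n r (fun x => f42 (x i0) (x i1))
        = (A + (-6) * B) + A := by
      have e1 : (fun x : EuclideanSpace ℝ (Fin n) => f42 (x i0) (x i1))
          = fun x => (x i0 ^ 4 + (-6) * (x i0 ^ 2 * x i1 ^ 2)) + x i1 ^ 4 := by
        funext x; simp only [f42]; ring
      have h1 : sphereAvg n r (fun x => (x i0 ^ 4 + (-6) * (x i0 ^ 2 * x i1 ^ 2)) + x i1 ^ 4)
          = sphereAvg n r (fun x => x i0 ^ 4 + (-6) * (x i0 ^ 2 * x i1 ^ 2))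
            + sphereAvg n r (fun x => x i1 ^ 4) :=
        sphereAvg_add ((hint4 i0).add ((hintc i0 i1).const_mul (-6))) (hint4 i1)
      have h2 : sphereAvg n r (fun x => x i0 ^ 4 + (-6) * (x i0 ^ 2 * x i1 ^ 2))
          = sphereAvg n r (fun x => x i0 ^ 4)
            + sphereAvg n r (fun x => (-6) * (x i0 ^ 2 * x i1 ^ 2)) :=
        sphereAvg_add (hint4 i0) ((hintc i0 i1).const_mul (-6))
      have h3 : sphereAvg n r (fun x => (-6) * (x i0 ^ 2 * x i1 ^ 2)) = (-6) * B :=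
        sphereAvg_const_mul (-6) _
      rw [e1, h1, h2, h3, hallA i1]
    rw [hexp] at hz
    linarith
  -- double sum
  have hdouble : ∑ i : Fin n, ∑ j : Fin n,
      sphereAvg n r (fun x => x i ^ 2 * x j ^ 2) = r ^ 4 := by
    have hcont_inner : ∀ i : Fin n,
        Continuous (fun x : EuclideanSpace ℝ (Fin n) => ∑ j : Fin n, x i ^ 2 * x j ^ 2) :=
      fun i => continuous_finset_sum _ (fun j _ => cont_coord_cross i j 2 2)
    have hstep1 : ∀ i : Fin n,
        sphereAvg n r (fun x => ∑ j : Fin n, x i ^ 2 * x j ^ 2)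
          = ∑ j : Fin n, sphereAvg n r (fun x => x i ^ 2 * x j ^ 2) :=
      fun i => sphereAvg_finsum r Finset.univ (fun j x => x i ^ 2 * x j ^ 2)
        (fun j _ => hintc i j)
    have hstep2 : sphereAvg n r (fun x => ∑ i : Fin n, ∑ j : Fin n, x i ^ 2 * x j ^ 2)
        = ∑ i : Fin n, sphereAvg n r (fun x => ∑ j : Fin n, x i ^ 2 * x j ^ 2) :=
      sphereAvg_finsum r Finset.univ (fun i x => ∑ j : Fin n, x i ^ 2 * x j ^ 2)
        (fun i _ => integrableOn_sphere hn hr (hcont_inner i))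
    have hstep3 : sphereAvg n r (fun x => ∑ i : Fin n, ∑ j : Fin n, x i ^ 2 * x j ^ 2)
        = r ^ 4 := by
      rw [sphereAvg_congr (g := fun _ => r ^ 4) ?_]
      · exact sphereAvg_const hn hr _
      · intro x hx
        rw [mem_sphere_zero_iff_norm] at hx
        have h1 : ∑ i : Fin n, ∑ j : Fin n, x i ^ 2 * x j ^ 2
            = (∑ i : Fin n, x i ^ 2) * (∑ j : Fin n, x j ^ 2) :=
          (Finset.sum_mul_sum _ _ _ _).symm
        rw [h1, ← esq, hx]
        ring
    rw [← Finset.sum_congr rfl (fun i _ => hstep1 i), ← hstep2, hstep3]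
  have hsplit : (n:ℝ) * A + (n:ℝ) * ((n:ℝ) - 1) * B = r ^ 4 := by
    have hin : ∀ i : Fin n, ∑ j : Fin n, sphereAvg n r (fun x => x i ^ 2 * x j ^ 2)
        = A + ((n:ℝ) - 1) * B := by
      intro i
      rw [← Finset.add_sum_erase _ _ (Finset.mem_univ i)]
      have hdiag : sphereAvg n r (fun x => x i ^ 2 * x i ^ 2) = A := by
        rw [show (fun x : EuclideanSpace ℝ (Fin n) => x i ^ 2 * x i ^ 2)
          = fun x => x i ^ 4 from funext fun x => by ring]
        exact hallA i
      rw [hdiag]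
      congr 1
      rw [Finset.sum_congr rfl (fun j hj => hallB i j (Ne.symm (Finset.mem_erase.1 hj).1)),
        Finset.sum_const, Finset.card_erase_of_mem (Finset.mem_univ i),
        Finset.card_univ, Fintype.card_fin, nsmul_eq_mul]
      have h1n : 1 ≤ n := by omega
      push_cast [Nat.cast_sub h1n]
      ring
    rw [Finset.sum_congr rfl (fun i _ => hin i), Finset.sum_const, Finset.card_univ,
      Fintype.card_fin, nsmul_eq_mul] at hdouble
    rw [← hdouble]
    ring
  have hkey : B * ((n:ℝ) * ((n:ℝ) + 2)) = r ^ 4 := by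
    linear_combination hsplit - (n:ℝ) * hA3
  have hBval : B = r ^ 4 / ((n:ℝ) * ((n:ℝ) + 2)) := by
    rw [eq_div_iff hne]
    exact hkey
  constructor
  · intro i
    rw [hallA i, hA3, hBval]
    ring
  · intro i j hij
    rw [hallB i j hij, hBval]

end
end AvgComp


section Shape
open scoped Classical

variable {n : ℕ}

lemma shape4 (α : Fin n →₀ ℕ) (he : ∀ i, Even (α i)) (h5 : (α.sum fun _ e => e) ≤ 5) :
    (∀ i, α i = 0) ∨ (∃ i, ∀ j, α j = if j = i then 2 else 0)
    ∨ (∃ i, ∀ j, α j = if j = i then 4 else 0)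
    ∨ (∃ i j, i ≠ j ∧ ∀ k, α k = if k = i then 2 else if k = j then 2 else 0) := by
  classical
  have hsum : (α.sum fun _ e => e) = ∑ k ∈ α.support, α k := rfl
  by_cases h0 : α.support = ∅
  · left
    intro i
    by_contra hne
    have : i ∈ α.support := Finsupp.mem_support_iff.2 hne
    simp [h0] at this
  obtain ⟨i, hi⟩ := Finset.nonempty_of_ne_empty h0
  have hii : α i ≠ 0 := Finsupp.mem_support_iff.1 hi
  obtain ⟨a, ha⟩ := he i
  have hi2 : 2 ≤ α i := by omega
  have hile : α i ≤ 5 := by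
    have h : α i ≤ ∑ k ∈ α.support, α k :=
      Finset.single_le_sum (f := fun k => α k) (fun _ _ => Nat.zero_le _) hi
    omega
  by_cases h1 : α.support.erase i = ∅
  · have hothers : ∀ j, j ≠ i → α j = 0 := by
      intro j hj
      by_contra hne
      have : j ∈ α.support.erase i :=
        Finset.mem_erase.2 ⟨hj, Finsupp.mem_support_iff.2 hne⟩
      simp [h1] at this
    have h24 : α i = 2 ∨ α i = 4 := by omega
    rcases h24 with h2 | h4
    · right; left
      exact ⟨i, fun j => by
        by_cases hji : j = i
        · subst hji; rw [if_pos rfl, h2]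
        · rw [if_neg hji]; exact hothers j hji⟩
    · right; right; left
      exact ⟨i, fun j => by
        by_cases hji : j = i
        · subst hji; rw [if_pos rfl, h4]
        · rw [if_neg hji]; exact hothers j hji⟩
  · obtain ⟨j, hj⟩ := Finset.nonempty_of_ne_empty h1
    have hjne : j ≠ i := (Finset.mem_erase.1 hj).1
    have hjs : j ∈ α.support := (Finset.mem_erase.1 hj).2
    have hjj : α j ≠ 0 := Finsupp.mem_support_iff.1 hjs
    obtain ⟨b, hb⟩ := he j
    have hj2 : 2 ≤ α j := by omega
    have hdecomp : ∑ k ∈ α.support, α k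
        = α i + (α j + ∑ k ∈ (α.support.erase i).erase j, α k) := by
      rw [Finset.add_sum_erase _ _ hj, Finset.add_sum_erase _ _ hi]
    have hrest1 : ∑ k ∈ (α.support.erase i).erase j, α k ≤ 1 := by omega
    have hrest0 : ∀ k, k ≠ i → k ≠ j → α k = 0 := by
      intro k hki hkj
      by_contra hne
      obtain ⟨c, hc⟩ := he k
      have hk2 : 2 ≤ α k := by omega
      have hkmem : k ∈ (α.support.erase i).erase j :=
        Finset.mem_erase.2 ⟨hkj, Finset.mem_erase.2 ⟨hki, Finsupp.mem_support_iff.2 hne⟩⟩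
      have h : α k ≤ ∑ k' ∈ (α.support.erase i).erase j, α k' :=
        Finset.single_le_sum (f := fun k' => α k') (fun _ _ => Nat.zero_le _) hkmem
      omega
    have hij5 : α i + α j ≤ 5 := by omega
    have h22 : α i = 2 ∧ α j = 2 := by omega
    right; right; right
    refine ⟨i, j, Ne.symm hjne, fun k => ?_⟩
    by_cases hki : k = i
    · subst hki; rw [if_pos rfl]; exact h22.1
    · by_cases hkj : k = j
      · subst hkj; rw [if_neg hki, if_pos rfl]; exact h22.2
      · rw [if_neg hki, if_neg hkj]; exact hrest0 k hki hkj

lemma prod_pow_single (x : EuclideanSpace ℝ (Fin n)) (i : Fin n) (k : ℕ) :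
    ∏ j, x j ^ (if j = i then k else 0) = x i ^ k := by
  rw [Finset.prod_eq_single i (fun j _ hji => by rw [if_neg hji, pow_zero])
    (fun h => absurd (Finset.mem_univ i) h), if_pos rfl]

lemma prod_pow_pair (x : EuclideanSpace ℝ (Fin n)) {i j : Fin n} (hij : i ≠ j) (k l : ℕ) :
    ∏ m, x m ^ (if m = i then k else if m = j then l else 0) = x i ^ k * x j ^ l := by
  rw [← Finset.mul_prod_erase _ _ (Finset.mem_univ i), if_pos rfl]
  rw [← Finset.mul_prod_erase _ _ (Finset.mem_erase.2 ⟨Ne.symm hij, Finset.mem_univ j⟩)]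
  rw [if_neg (Ne.symm hij), if_pos rfl]
  have hrest : ∏ m ∈ (Finset.univ.erase i).erase j,
      x m ^ (if m = i then k else if m = j then l else 0) = 1 := by
    apply Finset.prod_eq_one
    intro m hm
    have hmj : m ≠ j := (Finset.mem_erase.1 hm).1
    have hmi : m ≠ i := (Finset.mem_erase.1 (Finset.mem_erase.1 hm).2).1
    rw [if_neg hmi, if_neg hmj, pow_zero]
  rw [hrest, mul_one]

lemma prod_flip (α : Fin n →₀ ℕ) (i : Fin n) (hodd : ¬ Even (α i))
    (x : EuclideanSpace ℝ (Fin n)) :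
    (∏ j, (signedPerm n 1 (fun k => decide (k = i)) x j) ^ α j) = - ∏ j, (x j) ^ α j := by
  have hsp : ∀ j, signedPerm n 1 (fun k => decide (k = i)) x j
      = (if j = i then (-1:ℝ) else 1) * x j := by
    intro j
    simp [signedPerm, Equiv.Perm.one_apply, decide_eq_true_eq]
  calc (∏ j, (signedPerm n 1 (fun k => decide (k = i)) x j) ^ α j)
      = ∏ j, ((if j = i then (-1:ℝ) else 1) ^ α j * (x j) ^ α j) := by
        apply Finset.prod_congr rfl
        intro j _
        rw [hsp j, mul_pow]
    _ = (∏ j, (if j = i then (-1:ℝ) else 1) ^ α j) * ∏ j, (x j) ^ α j :=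
        Finset.prod_mul_distrib
    _ = - ∏ j, (x j) ^ α j := by
        have hsign : (∏ j, (if j = i then (-1:ℝ) else 1) ^ α j) = (-1:ℝ) ^ α i := by
          rw [Finset.prod_eq_single i (fun j _ hji => by rw [if_neg hji, one_pow])
            (fun h => absurd (Finset.mem_univ i) h), if_pos rfl]
        rw [hsign, Odd.neg_one_pow (Nat.not_even_iff_odd.1 (by exact_mod_cast hodd)), neg_one_mul]

end Shape

/-- A fully symmetric weighted set, with weight constant on each layer, is a Euclidean
5-design iff `∑_{r ∈ R} ∑_{x ∈ X_r} w_r f_{4,2}(x) = 0`. -/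
theorem fullySymmetric_isEuclideanDesign_five_iff
    (n : ℕ) (hn : 3 ≤ n) (X : Finset (EuclideanSpace ℝ (Fin n)))
    (w : EuclideanSpace ℝ (Fin n) → ℝ)
    (hX0 : ∀ x ∈ X, x ≠ 0) (hw : ∀ x ∈ X, 0 < w x)
    (hsym : FullySymmetric n X w)
    (hlayer : ∀ x ∈ X, ∀ y ∈ X, ‖x‖ = ‖y‖ → w x = w y) :
    IsEuclideanDesign n X w 5 ↔
      ∑ r ∈ X.image (fun x => ‖x‖), ∑ x ∈ X.filter (fun x => ‖x‖ = r),
        w x * f42 (x ⟨0, by omega⟩) (x ⟨1, by omega⟩) = 0 := by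
  classical
  have hn2 : 2 ≤ n := by omega
  have hn0R : (0:ℝ) < n := by
    have : (2:ℝ) ≤ n := by exact_mod_cast hn2
    linarith
  have hnn2 : (n:ℝ) * ((n:ℝ) + 2) ≠ 0 := by positivity
  set i0 : Fin n := ⟨0, by omega⟩ with hi0def
  set i1 : Fin n := ⟨1, by omega⟩ with hi1def
  have hi01 : i0 ≠ i1 := by
    intro hc; exact absurd (congrArg Fin.val hc) (by simp [hi0def, hi1def])
  have hrpos : ∀ r ∈ X.image (fun x => ‖x‖), 0 < r := by
    intro r hr
    obtain ⟨x, hx, rfl⟩ := Finset.mem_image.1 hr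
    exact norm_pos_iff.2 (hX0 x hx)
  have hfiber : ∀ F : EuclideanSpace ℝ (Fin n) → ℝ,
      ∑ r ∈ X.image (fun x => ‖x‖), ∑ x ∈ X.filter (fun x => ‖x‖ = r), F x
        = ∑ x ∈ X, F x :=
    fun F => Finset.sum_fiberwise_of_maps_to (fun x hx => Finset.mem_image_of_mem _ hx) F
  have hlayerc : ∀ c : ℝ → ℝ,
      ∑ r ∈ X.image (fun x => ‖x‖), (∑ x ∈ X.filter (fun x => ‖x‖ = r), w x) * c r
        = ∑ x ∈ X, w x * c ‖x‖ := by
    intro c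
    rw [← hfiber (fun x => w x * c ‖x‖)]
    apply Finset.sum_congr rfl
    intro r hr
    rw [Finset.sum_mul]
    apply Finset.sum_congr rfl
    intro x hx
    rw [(Finset.mem_filter.1 hx).2]
  have hXcomp : ∀ (g : Equiv.Perm (Fin n)) (ε : Fin n → Bool)
      (F : EuclideanSpace ℝ (Fin n) → ℝ),
      ∑ x ∈ X, w x * F (signedPerm n g ε x) = ∑ x ∈ X, w x * F x := by
    intro g ε F
    apply Finset.sum_nbij' (i := fun x => signedPerm n g ε x)
      (j := fun x => signedPerm n g⁻¹ (fun k => ε (g⁻¹ k)) x)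
    · intro a ha; exact (hsym g ε a ha).1
    · intro a ha; exact (hsym g⁻¹ _ a ha).1
    · intro a _; exact signedPerm_comp_inv n g ε a
    · intro a _; exact signedPerm_inv_comp n g ε a
    · intro a ha
      rw [(hsym g ε a ha).2]
  have hXcoord : ∀ (k : ℕ) (i j : Fin n),
      ∑ x ∈ X, w x * (x i) ^ k = ∑ x ∈ X, w x * (x j) ^ k := by
    intro k i j
    have h := hXcomp (Equiv.swap j i) (fun _ => false) (fun y => y j ^ k)
    have hpt : ∀ x : EuclideanSpace ℝ (Fin n),
        (signedPerm n (Equiv.swap j i) (fun _ => false) x) j = x i := by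
      intro x
      simp only [signedPerm, Bool.false_eq_true, if_false, one_mul]
      exact congrArg x (Equiv.swap_apply_left j i)
    calc ∑ x ∈ X, w x * (x i) ^ k
        = ∑ x ∈ X, w x * ((signedPerm n (Equiv.swap j i) (fun _ => false) x) j) ^ k :=
          (Finset.sum_congr rfl (fun x _ => by rw [hpt x])).symm
      _ = ∑ x ∈ X, w x * (x j) ^ k := h
  have hXcross : ∀ {i j i' j' : Fin n}, i ≠ j → i' ≠ j' →
      ∑ x ∈ X, w x * (x i ^ 2 * x j ^ 2) = ∑ x ∈ X, w x * (x i' ^ 2 * x j' ^ 2) := by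
    intro i j i' j' hij hij'
    obtain ⟨g, hg1, hg2⟩ := exists_swap_pair hij' hij
    have h := hXcomp g (fun _ => false) (fun y => y i' ^ 2 * y j' ^ 2)
    have hpt : ∀ x : EuclideanSpace ℝ (Fin n),
        (signedPerm n g (fun _ => false) x) i' ^ 2
          * (signedPerm n g (fun _ => false) x) j' ^ 2 = x i ^ 2 * x j ^ 2 := by
      intro x
      simp only [signedPerm, Bool.false_eq_true, if_false, one_mul]
      rw [show (g i' : Fin n) = i from hg1, show (g j' : Fin n) = j from hg2]
    calc ∑ x ∈ X, w x * (x i ^ 2 * x j ^ 2)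
        = ∑ x ∈ X, w x * ((signedPerm n g (fun _ => false) x) i' ^ 2
            * (signedPerm n g (fun _ => false) x) j' ^ 2) :=
          (Finset.sum_congr rfl (fun x _ => by rw [hpt x])).symm
      _ = ∑ x ∈ X, w x * (x i' ^ 2 * x j' ^ 2) := h
  constructor
  · -- forward direction
    intro hdes
    set p42 : MvPolynomial (Fin n) ℝ :=
      MvPolynomial.X i0 ^ 4 + MvPolynomial.X i1 ^ 4
        - MvPolynomial.C 6 * (MvPolynomial.X i0 ^ 2 * MvPolynomial.X i1 ^ 2) with hp42
    have hdeg : p42.totalDegree ≤ 5 := by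
      rw [hp42]
      apply le_trans (MvPolynomial.totalDegree_sub _ _)
      apply max_le
      · apply le_trans (MvPolynomial.totalDegree_add _ _)
        apply max_le <;> rw [MvPolynomial.totalDegree_X_pow] <;> omega
      · apply le_trans (MvPolynomial.totalDegree_mul _ _)
        have hC : (MvPolynomial.C (σ := Fin n) (6:ℝ)).totalDegree = 0 :=
          MvPolynomial.totalDegree_C _
        have hm : (MvPolynomial.X (R := ℝ) i0 ^ 2 * MvPolynomial.X i1 ^ 2).totalDegree ≤ 4 := by
          apply le_trans (MvPolynomial.totalDegree_mul _ _)
          rw [MvPolynomial.totalDegree_X_pow, MvPolynomial.totalDegree_X_pow]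
        omega
    have heval : ∀ x : EuclideanSpace ℝ (Fin n),
        MvPolynomial.eval (fun i => x i) p42 = f42 (x i0) (x i1) := by
      intro x
      rw [hp42]
      simp [f42]
      ring
    have hzero : ∀ r ∈ X.image (fun x => ‖x‖),
        sphereAvg n r (fun x => MvPolynomial.eval (fun i => x i) p42) = 0 := by
      intro r _
      rw [show (fun x : EuclideanSpace ℝ (Fin n) => MvPolynomial.eval (fun i => x i) p42)
        = fun x => f42 (x i0) (x i1) from funext heval]
      exact avg_f42_zero hn2 r
    have hd := hdes p42 hdeg
    rw [Finset.sum_congr rfl (fun r hr => by rw [hzero r hr, mul_zero]),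
      Finset.sum_const_zero] at hd
    calc ∑ r ∈ X.image (fun x => ‖x‖), ∑ x ∈ X.filter (fun x => ‖x‖ = r),
          w x * f42 (x i0) (x i1)
        = ∑ x ∈ X, w x * f42 (x i0) (x i1) := hfiber _
      _ = ∑ x ∈ X, w x * MvPolynomial.eval (fun i => x i) p42 :=
          Finset.sum_congr rfl (fun x _ => by rw [heval x])
      _ = 0 := hd.symm
  · -- reverse direction
    intro h0
    have hrel0 : ∑ x ∈ X, w x * f42 (x i0) (x i1) = 0 :=
      (hfiber fun x => w x * f42 (x i0) (x i1)).symm.trans h0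
    -- second moments
    have hcoord2 : ∀ i : Fin n,
        ∑ x ∈ X, w x * (x i) ^ 2 = (∑ x ∈ X, w x * ‖x‖ ^ 2) / n := by
      intro i
      have hcol : ∑ j : Fin n, ∑ x ∈ X, w x * (x j) ^ 2 = ∑ x ∈ X, w x * ‖x‖ ^ 2 := by
        rw [Finset.sum_comm]
        apply Finset.sum_congr rfl
        intro x _
        rw [← Finset.mul_sum, ← esq]
      rw [Finset.sum_congr rfl (fun j _ => hXcoord 2 j i), Finset.sum_const,
        Finset.card_univ, Fintype.card_fin, nsmul_eq_mul] at hcol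
      field_simp
      linarith
    -- fourth moments
    have hallQ : ∀ i : Fin n, ∑ x ∈ X, w x * (x i) ^ 4 = ∑ x ∈ X, w x * (x i0) ^ 4 :=
      fun i => hXcoord 4 i i0
    have hallP : ∀ i j : Fin n, i ≠ j → ∑ x ∈ X, w x * (x i ^ 2 * x j ^ 2)
        = ∑ x ∈ X, w x * (x i0 ^ 2 * x i1 ^ 2) :=
      fun i j hij => hXcross hij hi01
    set S4 : ℝ := ∑ x ∈ X, w x * ‖x‖ ^ 4 with hS4
    set Q : ℝ := ∑ x ∈ X, w x * (x i0) ^ 4 with hQ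
    set P : ℝ := ∑ x ∈ X, w x * (x i0 ^ 2 * x i1 ^ 2) with hP
    have hcol4 : ∑ i : Fin n, ∑ j : Fin n, ∑ x ∈ X, w x * (x i ^ 2 * x j ^ 2) = S4 := by
      rw [Finset.sum_congr rfl (fun i (_ : i ∈ Finset.univ) => Finset.sum_comm), Finset.sum_comm]
      rw [hS4]
      apply Finset.sum_congr rfl
      intro x _
      have h1 : ∀ i : Fin n, ∑ j : Fin n, w x * (x i ^ 2 * x j ^ 2)
          = w x * x i ^ 2 * ∑ j : Fin n, x j ^ 2 := by
        intro i
        rw [Finset.mul_sum]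
        apply Finset.sum_congr rfl
        intro j _
        ring
      rw [Finset.sum_congr rfl (fun i _ => h1 i), ← Finset.sum_mul, ← Finset.mul_sum,
        ← esq]
      ring
    have hsplit4 : (n:ℝ) * Q + (n:ℝ) * ((n:ℝ) - 1) * P = S4 := by
      have hin : ∀ i : Fin n, ∑ j : Fin n, ∑ x ∈ X, w x * (x i ^ 2 * x j ^ 2)
          = Q + ((n:ℝ) - 1) * P := by
        intro i
        rw [← Finset.add_sum_erase _ _ (Finset.mem_univ i)]
        have hdiag : ∑ x ∈ X, w x * (x i ^ 2 * x i ^ 2) = Q := by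
          rw [Finset.sum_congr rfl
            (fun x _ => by rw [show x i ^ 2 * x i ^ 2 = x i ^ 4 by ring])]
          exact hallQ i
        rw [hdiag]
        congr 1
        rw [Finset.sum_congr rfl
            (fun j hj => hallP i j (Ne.symm (Finset.mem_erase.1 hj).1)),
          Finset.sum_const, Finset.card_erase_of_mem (Finset.mem_univ i),
          Finset.card_univ, Fintype.card_fin, nsmul_eq_mul]
        have h1n : 1 ≤ n := by omega
        push_cast [Nat.cast_sub h1n]
        ring
      rw [Finset.sum_congr rfl (fun i _ => hin i), Finset.sum_const, Finset.card_univ,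
        Fintype.card_fin, nsmul_eq_mul] at hcol4
      rw [← hcol4]
      ring
    have hQ3 : Q = 3 * P := by
      have hexp : ∑ x ∈ X, w x * f42 (x i0) (x i1)
          = Q + (-6) * P + Q := by
        have hterm : ∀ x : EuclideanSpace ℝ (Fin n),
            w x * f42 (x i0) (x i1)
              = (w x * (x i0) ^ 4 + (-6) * (w x * (x i0 ^ 2 * x i1 ^ 2)))
                + w x * (x i1) ^ 4 := by
          intro x; simp only [f42]; ring
        rw [Finset.sum_congr rfl (fun x _ => hterm x), Finset.sum_add_distrib,
          Finset.sum_add_distrib, ← Finset.mul_sum, hallQ i1]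
      rw [hexp] at hrel0
      linarith
    have hPval : P = S4 / ((n:ℝ) * ((n:ℝ) + 2)) := by
      rw [eq_div_iff hnn2]
      linear_combination hsplit4 - (n:ℝ) * hQ3
    -- key identity for monomials
    have hkey : ∀ α : Fin n →₀ ℕ, (α.sum fun _ e => e) ≤ 5 →
        ∑ r ∈ X.image (fun x => ‖x‖), (∑ x ∈ X.filter (fun x => ‖x‖ = r), w x)
            * sphereAvg n r (fun x => ∏ i, (x i) ^ α i)
          = ∑ x ∈ X, w x * ∏ i, (x i) ^ α i := by
      intro α h5
      by_cases hev : ∀ i, Even (α i)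
      · rcases shape4 α hev h5 with hc0 | ⟨i, hci⟩ | ⟨i, hci⟩ | ⟨i, j, hij, hcij⟩
        · -- constant
          have hfunx : ∀ x : EuclideanSpace ℝ (Fin n), ∏ j, (x j) ^ α j = (1:ℝ) :=
            fun x => Finset.prod_eq_one (fun j _ => by rw [hc0 j, pow_zero])
          have hR : ∑ x ∈ X, w x * ∏ j, (x j) ^ α j = ∑ x ∈ X, w x * 1 :=
            Finset.sum_congr rfl (fun x _ => by rw [hfunx x])
          rw [show (fun x : EuclideanSpace ℝ (Fin n) => ∏ j, (x j) ^ α j)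
            = fun _ => (1:ℝ) from funext hfunx, hR]
          rw [Finset.sum_congr rfl
            (fun r hr => by rw [sphereAvg_const hn2 (hrpos r hr) (1:ℝ)])]
          exact hlayerc (fun _ => 1)
        · -- x i ^ 2
          have hfunx : ∀ x : EuclideanSpace ℝ (Fin n), ∏ j, (x j) ^ α j = x i ^ 2 := by
            intro x
            calc ∏ j, (x j) ^ α j = ∏ j, (x j) ^ (if j = i then 2 else 0) :=
                  Finset.prod_congr rfl (fun j _ => by rw [hci j])
              _ = x i ^ 2 := prod_pow_single x i 2
          have hR : ∑ x ∈ X, w x * ∏ j, (x j) ^ α j = ∑ x ∈ X, w x * x i ^ 2 :=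
            Finset.sum_congr rfl (fun x _ => by rw [hfunx x])
          rw [show (fun x : EuclideanSpace ℝ (Fin n) => ∏ j, (x j) ^ α j)
            = fun x => x i ^ 2 from funext hfunx, hR]
          rw [Finset.sum_congr rfl
            (fun r hr => by rw [avg_sq hn2 (hrpos r hr) i])]
          rw [hlayerc (fun t => t ^ 2 / n)]
          rw [Finset.sum_congr rfl (fun x (_ : x ∈ X) =>
            (mul_div_assoc (w x) (‖x‖ ^ 2) (n:ℝ)).symm), ← Finset.sum_div]
          exact (hcoord2 i).symm
        · -- x i ^ 4
          have hfunx : ∀ x : EuclideanSpace ℝ (Fin n), ∏ j, (x j) ^ α j = x i ^ 4 := by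
            intro x
            calc ∏ j, (x j) ^ α j = ∏ j, (x j) ^ (if j = i then 4 else 0) :=
                  Finset.prod_congr rfl (fun j _ => by rw [hci j])
              _ = x i ^ 4 := prod_pow_single x i 4
          have hR : ∑ x ∈ X, w x * ∏ j, (x j) ^ α j = ∑ x ∈ X, w x * x i ^ 4 :=
            Finset.sum_congr rfl (fun x _ => by rw [hfunx x])
          rw [show (fun x : EuclideanSpace ℝ (Fin n) => ∏ j, (x j) ^ α j)
            = fun x => x i ^ 4 from funext hfunx, hR]
          rw [Finset.sum_congr rfl
            (fun r hr => by rw [(avg_quartic hn2 (hrpos r hr)).1 i])]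
          rw [hlayerc (fun t => 3 * t ^ 4 / ((n:ℝ) * ((n:ℝ) + 2)))]
          have hlhs : ∑ x ∈ X, w x * (3 * ‖x‖ ^ 4 / ((n:ℝ) * ((n:ℝ) + 2)))
              = 3 * S4 / ((n:ℝ) * ((n:ℝ) + 2)) := by
            calc ∑ x ∈ X, w x * (3 * ‖x‖ ^ 4 / ((n:ℝ) * ((n:ℝ) + 2)))
                = ∑ x ∈ X, (3 / ((n:ℝ) * ((n:ℝ) + 2))) * (w x * ‖x‖ ^ 4) :=
                  Finset.sum_congr rfl (fun x _ => by ring)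
              _ = (3 / ((n:ℝ) * ((n:ℝ) + 2))) * ∑ x ∈ X, w x * ‖x‖ ^ 4 :=
                  (Finset.mul_sum _ _ _).symm
              _ = 3 * S4 / ((n:ℝ) * ((n:ℝ) + 2)) := by rw [← hS4]; ring
          rw [hlhs, hallQ i, hQ3, hPval]
          ring
        · -- x i ^ 2 * x j ^ 2
          have hfunx : ∀ x : EuclideanSpace ℝ (Fin n),
              ∏ k, (x k) ^ α k = x i ^ 2 * x j ^ 2 := by
            intro x
            calc ∏ k, (x k) ^ α k
                = ∏ k, (x k) ^ (if k = i then 2 else if k = j then 2 else 0) :=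
                  Finset.prod_congr rfl (fun k _ => by rw [hcij k])
              _ = x i ^ 2 * x j ^ 2 := prod_pow_pair x hij 2 2
          have hR : ∑ x ∈ X, w x * ∏ k, (x k) ^ α k
              = ∑ x ∈ X, w x * (x i ^ 2 * x j ^ 2) :=
            Finset.sum_congr rfl (fun x _ => by rw [hfunx x])
          rw [show (fun x : EuclideanSpace ℝ (Fin n) => ∏ k, (x k) ^ α k)
            = fun x => x i ^ 2 * x j ^ 2 from funext hfunx, hR]
          rw [Finset.sum_congr rfl
            (fun r hr => by rw [(avg_quartic hn2 (hrpos r hr)).2 i j hij])]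
          rw [hlayerc (fun t => t ^ 4 / ((n:ℝ) * ((n:ℝ) + 2)))]
          have hlhs : ∑ x ∈ X, w x * (‖x‖ ^ 4 / ((n:ℝ) * ((n:ℝ) + 2)))
              = S4 / ((n:ℝ) * ((n:ℝ) + 2)) := by
            calc ∑ x ∈ X, w x * (‖x‖ ^ 4 / ((n:ℝ) * ((n:ℝ) + 2)))
                = ∑ x ∈ X, (1 / ((n:ℝ) * ((n:ℝ) + 2))) * (w x * ‖x‖ ^ 4) :=
                  Finset.sum_congr rfl (fun x _ => by ring)
              _ = (1 / ((n:ℝ) * ((n:ℝ) + 2))) * ∑ x ∈ X, w x * ‖x‖ ^ 4 :=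
                  (Finset.mul_sum _ _ _).symm
              _ = S4 / ((n:ℝ) * ((n:ℝ) + 2)) := by rw [← hS4]; ring
          rw [hlhs, hallP i j hij, hPval]
      · -- some exponent odd
        push_neg at hev
        obtain ⟨i, hoddi⟩ := hev
        have hRHS0 : ∑ x ∈ X, w x * ∏ j, (x j) ^ α j = 0 := by
          have h := hXcomp 1 (fun k => decide (k = i)) (fun y => ∏ j, (y j) ^ α j)
          have h2 : ∑ x ∈ X, w x * ∏ j,
              ((signedPerm n 1 (fun k => decide (k = i)) x) j) ^ α j
              = ∑ x ∈ X, -(w x * ∏ j, (x j) ^ α j) :=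
            Finset.sum_congr rfl (fun x _ => by rw [prod_flip α i hoddi x]; ring)
          rw [h2, Finset.sum_neg_distrib] at h
          linarith
        have hLHS0 : ∀ r ∈ X.image (fun x => ‖x‖),
            sphereAvg n r (fun x => ∏ j, (x j) ^ α j) = 0 := by
          intro r _
          apply sphereAvg_zero_of_odd (spIso n 1 (fun k => decide (k = i)))
            (fun x => signedPerm_norm n 1 _ x)
          intro x
          show (∏ j, ((signedPerm n 1 (fun k => decide (k = i)) x) j) ^ α j)
            = - ∏ j, (x j) ^ α j
          exact prod_flip α i hoddi x
        rw [Finset.sum_congr rfl (fun r hr => by rw [hLHS0 r hr, mul_zero]),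
          Finset.sum_const_zero, hRHS0]
    -- main reverse argument
    intro f hf
    have hdecomp : ∀ x : EuclideanSpace ℝ (Fin n),
        MvPolynomial.eval (fun i => x i) f
          = ∑ α ∈ f.support, MvPolynomial.coeff α f * ∏ i, (x i) ^ α i := by
      intro x
      conv_lhs => rw [f.as_sum]
      rw [map_sum]
      apply Finset.sum_congr rfl
      intro α _
      rw [MvPolynomial.eval_monomial]
      congr 1
      exact Finsupp.prod_fintype _ _ (fun i => pow_zero _)
    have hint : ∀ r ∈ X.image (fun x => ‖x‖), ∀ α ∈ f.support,
        IntegrableOn (fun x : EuclideanSpace ℝ (Fin n) =>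
          MvPolynomial.coeff α f * ∏ i, (x i) ^ α i)
          (sphere (0 : EuclideanSpace ℝ (Fin n)) r) μH[(n:ℝ)-1] := by
      intro r hr α _
      exact integrableOn_sphere hn2 (hrpos r hr)
        (continuous_const.mul (continuous_finset_prod _ (fun i _ => cont_coord_pow i (α i))))
    have havg : ∀ r ∈ X.image (fun x => ‖x‖),
        sphereAvg n r (fun x => MvPolynomial.eval (fun i => x i) f)
          = ∑ α ∈ f.support, MvPolynomial.coeff α f
              * sphereAvg n r (fun x => ∏ i, (x i) ^ α i) := by
      intro r hr
      rw [show (fun x : EuclideanSpace ℝ (Fin n) => MvPolynomial.eval (fun i => x i) f)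
        = fun x => ∑ α ∈ f.support, MvPolynomial.coeff α f * ∏ i, (x i) ^ α i
        from funext hdecomp]
      rw [sphereAvg_finsum r f.support _ (hint r hr)]
      exact Finset.sum_congr rfl (fun α _ => sphereAvg_const_mul _ _)
    have hdegα : ∀ α ∈ f.support, (α.sum fun _ e => e) ≤ 5 :=
      fun α hα => le_trans (MvPolynomial.le_totalDegree hα) hf
    calc ∑ r ∈ X.image (fun x => ‖x‖), (∑ x ∈ X.filter (fun x => ‖x‖ = r), w x)
            * sphereAvg n r (fun x => MvPolynomial.eval (fun i => x i) f)
        = ∑ r ∈ X.image (fun x => ‖x‖), ∑ α ∈ f.support,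
            (∑ x ∈ X.filter (fun x => ‖x‖ = r), w x)
              * (MvPolynomial.coeff α f * sphereAvg n r (fun x => ∏ i, (x i) ^ α i)) := by
          apply Finset.sum_congr rfl
          intro r hr
          rw [havg r hr, Finset.mul_sum]
      _ = ∑ α ∈ f.support, ∑ r ∈ X.image (fun x => ‖x‖),
            (∑ x ∈ X.filter (fun x => ‖x‖ = r), w x)
              * (MvPolynomial.coeff α f * sphereAvg n r (fun x => ∏ i, (x i) ^ α i)) :=
          Finset.sum_comm
      _ = ∑ α ∈ f.support, MvPolynomial.coeff α f
            * ∑ r ∈ X.image (fun x => ‖x‖), (∑ x ∈ X.filter (fun x => ‖x‖ = r), w x)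
              * sphereAvg n r (fun x => ∏ i, (x i) ^ α i) := by
          apply Finset.sum_congr rfl
          intro α _
          rw [Finset.mul_sum]
          exact Finset.sum_congr rfl (fun r _ => by ring)
      _ = ∑ α ∈ f.support, MvPolynomial.coeff α f
            * ∑ x ∈ X, w x * ∏ i, (x i) ^ α i := by
          apply Finset.sum_congr rfl
          intro α hα
          rw [hkey α (hdegα α hα)]
      _ = ∑ x ∈ X, ∑ α ∈ f.support, MvPolynomial.coeff α f
            * (w x * ∏ i, (x i) ^ α i) := by
          rw [Finset.sum_congr rfl (fun α (_ : α ∈ f.support) =>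
            Finset.mul_sum X (fun x => w x * ∏ i, (x i) ^ α i) (MvPolynomial.coeff α f))]
          exact Finset.sum_comm
      _ = ∑ x ∈ X, w x * MvPolynomial.eval (fun i => x i) f := by
          apply Finset.sum_congr rfl
          intro x _
          rw [hdecomp x, Finset.mul_sum]
          exact Finset.sum_congr rfl (fun α _ => by ring)
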